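/- arXiv:1910.12996 — 2 statements merged into one kernel-verified Lean document; each statement's English description precedes it below -/
import Mathlib

section
/- The map 𝓑 : (f,g) ↦ 𝓑(f,g) from pairs of meromorphic functions to holomorphic Legendrian maps is not continuous: with M = ℂ, f(x) = x² and g_ε(x) = (x+ε)², the curve 𝓑(f,g_ε)(x) = [x+ε : (1/2)x(x²-ε²) : (x+ε)³ : x] satisfies 𝓑(f,g_ε)(0) = [1:0:ε²:0] for ε ≠ 0, whereas 𝓑(f,g₀)(0) = [1:0:0:1]. In particular, lim_{ε→0} 𝓑(f,g_ε)(0) = [1:0:0:0] ≠ 𝓑(f,g₀)(0). -/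
/-! The limit point is wrong because 𝓑(f,g_ε)(0) is computed by cancelling the factor ε from
`Bcurve ε 0`, whereas 𝓑(f,g₀) is computed by cancelling the factor x from `Bcurve 0 x`;
the two cancellations do not commute with ε → 0. -/

open Filter Topology

/-- With f(x) = x² and g_ε(x) = (x+ε)², the Legendrian curve 𝓑(f,g_ε) in ℂP³ is
given (in homogeneous coordinates) by x ↦ [x+ε : ½x(x²-ε²) : (x+ε)³ : x]. -/
noncomputable def Bcurve (ε x : ℂ) : Fin 4 → ℂ :=
  ![x + ε, (1/2) * x * (x ^ 2 - ε ^ 2), (x + ε) ^ 3, x]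

lemma Bcurve_ne_zero_of_ne {ε : ℂ} (hε : ε ≠ 0) : Bcurve ε 0 ≠ 0 := by
  intro h
  exact hε (by simpa [Bcurve] using congrFun h 0)

lemma vecA_ne_zero (ε : ℂ) : (![1, 0, ε ^ 2, 0] : Fin 4 → ℂ) ≠ 0 := by
  intro h
  simpa using congrFun h 0

lemma Bcurve_zero_ne_zero {x : ℂ} (hx : x ≠ 0) : Bcurve 0 x ≠ 0 := by
  intro h
  exact hx (by simpa [Bcurve] using congrFun h 3)

lemma vecB_ne_zero (x : ℂ) : (![1, (1/2) * x ^ 2, x ^ 2, 1] : Fin 4 → ℂ) ≠ 0 := by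
  intro h
  simpa using congrFun h 0

lemma vecC_ne_zero : (![1, 0, 0, 0] : Fin 4 → ℂ) ≠ 0 := by
  intro h
  simpa using congrFun h 0

lemma vecD_ne_zero : (![1, 0, 0, 1] : Fin 4 → ℂ) ≠ 0 := by
  intro h
  simpa using congrFun h 0

theorem Projectivization.mk_ne_mk_of_apply_eq_zero {K ι : Type*} [Field K] {v w : ι → K}
    (hv : v ≠ 0) (hw : w ≠ 0) {i : ι} (hvi : v i = 0) (hwi : w i ≠ 0) :
    Projectivization.mk K v hv ≠ Projectivization.mk K w hw := by
  rw [Ne, Projectivization.mk_eq_mk_iff']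
  rintro ⟨a, rfl⟩
  have ha : a = 0 := by simpa [hwi] using hvi
  exact hv (by simp [ha])

lemma Bcurve_eq_smul_at_zero (ε : ℂ) : Bcurve ε 0 = ε • ![1, 0, ε ^ 2, 0] := by
  ext i
  fin_cases i <;> simp [Bcurve]
  ring

lemma Bcurve_zero_eq_smul (x : ℂ) : Bcurve 0 x = x • ![1, (1/2) * x ^ 2, x ^ 2, 1] := by
  ext i
  fin_cases i <;> simp [Bcurve] <;> ring

/-- The map (f,g) ↦ 𝓑(f,g) is not continuous: 𝓑(f,g_ε)(0) = [1:0:ε²:0] for ε ≠ 0,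
whereas (after cancelling the common factor x) 𝓑(f,g₀) = [1:½x²:x²:1] and
𝓑(f,g₀)(0) = [1:0:0:1]; the limit as ε → 0 of 𝓑(f,g_ε)(0) is [1:0:0:0] ≠ [1:0:0:1]. -/
theorem stmt9 :
    (∀ ε : ℂ, ∀ hε : ε ≠ 0,
      Projectivization.mk ℂ (Bcurve ε 0) (Bcurve_ne_zero_of_ne hε)
        = Projectivization.mk ℂ ![1, 0, ε ^ 2, 0] (vecA_ne_zero ε)) ∧
    (∀ x : ℂ, ∀ hx : x ≠ 0,
      Projectivization.mk ℂ (Bcurve 0 x) (Bcurve_zero_ne_zero hx)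
        = Projectivization.mk ℂ ![1, (1/2) * x ^ 2, x ^ 2, 1] (vecB_ne_zero x)) ∧
    Projectivization.mk ℂ ![1, (1/2) * (0:ℂ) ^ 2, (0:ℂ) ^ 2, 1] (vecB_ne_zero 0)
      = Projectivization.mk ℂ ![1, 0, 0, 1] vecD_ne_zero ∧
    Tendsto (fun ε : ℂ => (![1, 0, ε ^ 2, 0] : Fin 4 → ℂ)) (𝓝 0)
      (𝓝 (![1, 0, 0, 0] : Fin 4 → ℂ)) ∧
    Projectivization.mk ℂ ![1, 0, 0, 0] vecC_ne_zero
      ≠ Projectivization.mk ℂ ![1, 0, 0, 1] vecD_ne_zero := by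
  refine ⟨fun ε _ ↦ ?_, fun x _ ↦ ?_, by norm_num, ?_, ?_⟩
  · exact (Projectivization.mk_eq_mk_iff' ..).2 ⟨ε, (Bcurve_eq_smul_at_zero ε).symm⟩
  · exact (Projectivization.mk_eq_mk_iff' ..).2 ⟨x, (Bcurve_zero_eq_smul x).symm⟩
  · have hcont : Continuous (fun ε : ℂ ↦ (![1, 0, ε ^ 2, 0] : Fin 4 → ℂ)) := by fun_prop
    simpa using hcont.tendsto 0
  · exact Projectivization.mk_ne_mk_of_apply_eq_zero _ _ (i := 3) (by simp) (by simp)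
end

section
/- Let g be a meromorphic function near a point p of a Riemann surface such that g, viewed as a holomorphic map to ℂP¹, is an immersion at p (i.e. in a local coordinate z at p, g has order ±1 at p, or g - g(p) has a simple zero). Then for any meromorphic f, the projective curve 𝓑(f,g) = [g' : fg' - (1/2)f'g : gg' : (1/2)f'] is an immersion at p, i.e. after clearing the common factor z^m (m the minimal order of the four components), the minimal and second-minimal orders of the components differ by exactly 1. -/
open Topology Filter

/-!
Write `g = x ^ b` and `f = x ^ a h`. The components of `𝓑(f, g)` are then `x ^ n k` times
analytic functions, with exponents `b - 1, a + b - 1, 2b - 1, a - 1` and values at `0` equal to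
`b, (b - a / 2) h 0, b, a h 0 / 2`. If `a ≤ b - 2`, the two `f`-components have the two smallest
orders, and these differ by one. Otherwise `f = x ^ (b - 1) F` with `F` analytic; the
`f`-components then vanish to order at least `min (b - 1) (2b - 1)` (for `b = -1` only after the
leading terms of `f g'` and `f' g / 2` cancel), so `g'` and `g g'` attain the two smallest orders.
-/

theorem zpow_eq_zpow_mul_pow_toNat {G₀ : Type*} [GroupWithZero G₀] {x : G₀} (hx : x ≠ 0)
    {m n : ℤ} (h : m ≤ n) : x ^ n = x ^ m * x ^ (n - m).toNat := by
  rw [← zpow_natCast, Int.toNat_of_nonneg (by omega), ← zpow_add₀ hx, add_sub_cancel]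

noncomputable def bryantCurve (f g : ℂ → ℂ) : Fin 4 → ℂ → ℂ :=
  ![deriv g, fun x => f x * deriv g x - 1 / 2 * deriv f x * g x, fun x => g x * deriv g x,
    fun x => 1 / 2 * deriv f x]

def IsImmersionAtZero (c : Fin 4 → ℂ → ℂ) : Prop :=
  ∃ (m : ℤ) (u : Fin 4 → ℂ → ℂ), (∀ k, AnalyticAt ℂ (u k) 0) ∧
    (∀ᶠ x in 𝓝[≠] (0 : ℂ), ∀ k, c k x = x ^ m * u k x) ∧
    (∃ i, u i 0 ≠ 0) ∧ ∃ i j, u i 0 ≠ 0 ∧ deriv (fun x => u j x / u i x) 0 ≠ 0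

theorem deriv_id_mul_at_zero {φ : ℂ → ℂ} (hφ : DifferentiableAt ℂ φ 0) :
    deriv (fun x => x * φ x) 0 = φ 0 := by
  rw [deriv_fun_mul differentiableAt_fun_id hφ]
  simp

theorem isImmersionAtZero_of_orders {c : Fin 4 → ℂ → ℂ} (n : Fin 4 → ℤ)
    (U : Fin 4 → ℂ → ℂ) (hU : ∀ k, AnalyticAt ℂ (U k) 0)
    (hc : ∀ᶠ x in 𝓝[≠] (0 : ℂ), ∀ k, c k x = x ^ n k * U k x)
    {i j : Fin 4} (hmin : ∀ k, n i ≤ n k) (hij : n j = n i + 1) (hi : U i 0 ≠ 0)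
    (hj : U j 0 ≠ 0) : IsImmersionAtZero c := by
  refine ⟨n i, fun k x => x ^ (n k - n i).toNat * U k x, fun k => by fun_prop, ?_, ⟨i, ?_⟩,
    i, j, ?_, ?_⟩
  · filter_upwards [hc, self_mem_nhdsWithin] with x hcx hx k
    rw [hcx, zpow_eq_zpow_mul_pow_toNat hx (hmin k), mul_assoc]
  · simpa
  · simpa
  · have hquot : (fun x => x ^ (n j - n i).toNat * U j x / (x ^ (n i - n i).toNat * U i x)) =
        fun x => x * (U j x / U i x) := by
      funext x; simp [hij, mul_div_assoc]
    rw [hquot, deriv_id_mul_at_zero ((hU j).differentiableAt.fun_div (hU i).differentiableAt hi)]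
    exact div_ne_zero hj hi

theorem eventuallyEq_deriv_zpow_mul {f h : ℂ → ℂ} {a : ℤ} (hh : AnalyticAt ℂ h 0)
    (hf : f =ᶠ[𝓝[≠] 0] fun x => x ^ a * h x) :
    deriv f =ᶠ[𝓝[≠] 0] fun x => x ^ (a - 1) * (a * h x + x * deriv h x) := by
  filter_upwards [hf.nhdsNE_deriv, self_mem_nhdsWithin,
    nhdsWithin_le_nhds hh.eventually_analyticAt] with x hfx (hx : x ≠ 0) hhx
  rw [hfx, deriv_fun_mul (differentiableAt_zpow.2 (Or.inl hx)) hhx.differentiableAt, deriv_zpow,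
    zpow_sub_one₀ hx]
  field_simp

theorem bryantCurve_eventuallyEq {f g h : ℂ → ℂ} {a b : ℤ} (hh : AnalyticAt ℂ h 0)
    (hf : f =ᶠ[𝓝[≠] 0] fun x => x ^ a * h x) (hg : g =ᶠ[𝓝[≠] 0] fun x => x ^ b) :
    ∀ᶠ x in 𝓝[≠] 0,
      bryantCurve f g 0 x = x ^ (b - 1) * b ∧
      bryantCurve f g 1 x = x ^ (a + b - 1) * (b * h x - (a * h x + x * deriv h x) / 2) ∧
      bryantCurve f g 2 x = x ^ (2 * b - 1) * b ∧
      bryantCurve f g 3 x = x ^ (a - 1) * ((a * h x + x * deriv h x) / 2) := by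
  have hg' : deriv g =ᶠ[𝓝[≠] 0] fun x => x ^ (b - 1) * b := by
    filter_upwards [eventuallyEq_deriv_zpow_mul analyticAt_const
      (hg.trans (Eventually.of_forall fun x => (mul_one (x ^ b)).symm))] with x hx
    simp [hx]
  filter_upwards [hf, hg, eventuallyEq_deriv_zpow_mul hh hf, hg', self_mem_nhdsWithin]
    with x hfx hgx hf'x hg'x (hx : x ≠ 0)
  simp only [bryantCurve, Matrix.cons_val, hfx, hgx, hf'x, hg'x, true_and]
  simp only [zpow_sub_one₀ hx, zpow_add₀ hx, two_mul]
  refine ⟨?_, ?_, ?_⟩ <;> field_simp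

theorem isImmersionAtZero_bryantCurve_of_pole {f g h : ℂ → ℂ} {a b : ℤ}
    (hb : b = 1 ∨ b = -1) (hh : AnalyticAt ℂ h 0) (hh0 : h 0 ≠ 0) (ha : a ≤ b - 2)
    (hf : f =ᶠ[𝓝[≠] 0] fun x => x ^ a * h x) (hg : g =ᶠ[𝓝[≠] 0] fun x => x ^ b) :
    IsImmersionAtZero (bryantCurve f g) := by
  have hU₁ : (b : ℂ) * h 0 - (a * h 0 + 0 * deriv h 0) / 2 ≠ 0 := by
    have : (b : ℂ) - a / 2 ≠ 0 := by
      rw [sub_ne_zero, ne_eq, eq_div_iff two_ne_zero]; exact_mod_cast (by omega : b * 2 ≠ a)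
    convert mul_ne_zero this hh0 using 1; ring
  have hU₃ : ((a : ℂ) * h 0 + 0 * deriv h 0) / 2 ≠ 0 := by
    simpa using mul_ne_zero (Int.cast_ne_zero.2 (by omega : a ≠ 0)) hh0
  set U : Fin 4 → ℂ → ℂ := ![fun _ => b, fun x => b * h x - (a * h x + x * deriv h x) / 2,
    fun _ => b, fun x => (a * h x + x * deriv h x) / 2]
  have hU : ∀ k, AnalyticAt ℂ (U k) 0 := by
    intro k; fin_cases k <;> simp only [U, Fin.reduceFinMk, Matrix.cons_val] <;> fun_prop
  have hc : ∀ᶠ x in 𝓝[≠] 0, ∀ k,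
      bryantCurve f g k x = x ^ ![b - 1, a + b - 1, 2 * b - 1, a - 1] k * U k x := by
    filter_upwards [bryantCurve_eventuallyEq hh hf hg] with x hx
    simpa [Fin.forall_fin_succ, U] using hx
  rcases hb with rfl | rfl
  · refine isImmersionAtZero_of_orders _ _ hU hc (i := 3) (j := 1) ?_ (by simp) hU₃ hU₁
    intro k; fin_cases k <;> simp only [Fin.reduceFinMk, Matrix.cons_val] <;> omega
  · refine isImmersionAtZero_of_orders _ _ hU hc (i := 1) (j := 3) ?_
      (by simp only [Matrix.cons_val]; ring) hU₁ hU₃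
    intro k; fin_cases k <;> simp only [Fin.reduceFinMk, Matrix.cons_val] <;> omega

theorem isImmersionAtZero_bryantCurve_of_analytic {f g F : ℂ → ℂ} {b : ℤ}
    (hb : b = 1 ∨ b = -1) (hF : AnalyticAt ℂ F 0)
    (hf : f =ᶠ[𝓝[≠] 0] fun x => x ^ (b - 1) * F x) (hg : g =ᶠ[𝓝[≠] 0] fun x => x ^ b) :
    IsImmersionAtZero (bryantCurve f g) := by
  have hform := bryantCurve_eventuallyEq hF hf hg
  rcases hb with rfl | rfl
  · set U : Fin 4 → ℂ → ℂ :=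
      ![fun _ => 1, fun x => F x - x * deriv F x / 2, fun _ => 1, fun x => deriv F x / 2]
    refine isImmersionAtZero_of_orders ![0, 0, 1, 0] U (i := 0) (j := 2) ?_ ?_ (by decide) rfl
      (by simp [U]) (by simp [U])
    · intro k; fin_cases k <;> simp only [U, Fin.reduceFinMk, Matrix.cons_val] <;> fun_prop
    · filter_upwards [hform, self_mem_nhdsWithin] with x hx (hx0 : x ≠ 0)
      obtain ⟨h0, h1, h2, h3⟩ := hx
      intro k; fin_cases k <;> simp only [U, Fin.reduceFinMk, Matrix.cons_val]
      · rw [h0]; norm_num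
      · rw [h1]; norm_num
      · rw [h2]; norm_num
      · rw [h3]; push_cast; field_simp; ring
  · set U : Fin 4 → ℂ → ℂ :=
      ![fun _ => -1, fun x => -deriv F x / 2, fun _ => -1, fun x => (x * deriv F x - 2 * F x) / 2]
    refine isImmersionAtZero_of_orders ![-2, -3, -3, -3] U (i := 2) (j := 0) ?_ ?_ (by decide) rfl
      (by simp [U]) (by simp [U])
    · intro k; fin_cases k <;> simp only [U, Fin.reduceFinMk, Matrix.cons_val] <;> fun_prop
    · filter_upwards [hform, self_mem_nhdsWithin] with x hx (hx0 : x ≠ 0)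
      obtain ⟨h0, h1, h2, h3⟩ := hx
      intro k; fin_cases k <;> simp only [U, Fin.reduceFinMk, Matrix.cons_val]
      · rw [h0]; norm_num
      · rw [h1]; push_cast; field_simp; ring
      · rw [h2]; norm_num
      · rw [h3]; push_cast; ring

/-- If g has order b = ±1 at the point (i.e. g is an immersion into ℂP¹ there, the
point being taken as 0 in a local coordinate in which g(x) = xᵇ), then for any
meromorphic f (either constant, or f(x) = xᵃh(x) with h analytic, h(0) ≠ 0), the
projective curve 𝓑(f,g) = [g' : fg' - ½f'g : gg' : ½f'] is an immersion at the point: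
after factoring out the common power xᵐ (m the minimal order of the four components,
so that the components become analytic functions u i with some u i nonvanishing at 0),
the map into the corresponding affine chart has nonzero derivative at 0 — equivalently,
the smallest and second smallest orders of the components differ by exactly 1. -/
theorem stmt11 (f g : ℂ → ℂ) (b : ℤ) (hb : b = 1 ∨ b = -1)
    (hg : ∀ᶠ x in 𝓝[≠] (0 : ℂ), g x = x ^ b)
    (hf : (∃ c : ℂ, ∀ᶠ x in 𝓝[≠] (0 : ℂ), f x = c) ∨
      (∃ a : ℤ, ∃ h : ℂ → ℂ, AnalyticAt ℂ h 0 ∧ h 0 ≠ 0 ∧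
        ∀ᶠ x in 𝓝[≠] (0 : ℂ), f x = x ^ a * h x)) :
    ∃ (m : ℤ) (u : Fin 4 → ℂ → ℂ),
      (∀ i, AnalyticAt ℂ (u i) 0) ∧
      (∀ᶠ x in 𝓝[≠] (0 : ℂ),
        deriv g x = x ^ m * u 0 x ∧
        f x * deriv g x - (1/2) * deriv f x * g x = x ^ m * u 1 x ∧
        g x * deriv g x = x ^ m * u 2 x ∧
        (1/2) * deriv f x = x ^ m * u 3 x) ∧
      (∃ i, u i 0 ≠ 0) ∧
      (∃ i j, u i 0 ≠ 0 ∧ deriv (fun x => u j x / u i x) 0 ≠ 0) := by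
  obtain ⟨a, h, hh, hh0, hfa⟩ : ∃ (a : ℤ) (h : ℂ → ℂ), AnalyticAt ℂ h 0 ∧
      (b - 1 ≤ a ∨ h 0 ≠ 0) ∧ f =ᶠ[𝓝[≠] 0] fun x => x ^ a * h x := by
    rcases hf with ⟨c, hc⟩ | ⟨a, h, hh, hh0, hfa⟩
    · exact ⟨0, fun _ => c, analyticAt_const, Or.inl (by omega),
        by simpa [EventuallyEq] using hc⟩
    · exact ⟨a, h, hh, Or.inr hh0, hfa⟩
  have himm : IsImmersionAtZero (bryantCurve f g) := by
    by_cases ha : b - 1 ≤ a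
    · refine isImmersionAtZero_bryantCurve_of_analytic hb (by fun_prop) ?_ hg
        (F := fun x => x ^ (a - (b - 1)).toNat * h x)
      filter_upwards [hfa, self_mem_nhdsWithin] with x hx (hx0 : x ≠ 0)
      rw [hx, zpow_eq_zpow_mul_pow_toNat hx0 ha, mul_assoc]
    · exact isImmersionAtZero_bryantCurve_of_pole hb hh (hh0.resolve_left ha) (by omega) hfa hg
  obtain ⟨m, u, hu, hc, hnz, hder⟩ := himm
  exact ⟨m, u, hu, hc.mono fun x hx => ⟨hx 0, hx 1, hx 2, hx 3⟩, hnz, hder⟩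
end
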